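/- arXiv:1111.6552 — 5 statements merged into one kernel-verified Lean document; each statement's English description precedes it below -/
import Mathlib

section
/- The bond measure is anti-monotone: if X ⊆ Y are nonempty itemsets with SDisj(X) > 0, then bond(Y) ≤ bond(X). -/
variable {τ ι : Type*} [Fintype τ] [Fintype ι]

/-- Conjunctive support: number of transactions containing every item of `X`. -/
noncomputable def SConj (R : τ → ι → Prop) (X : Set ι) : ℕ := Set.ncard {t : τ | ∀ i ∈ X, R t i}

/-- Disjunctive support: number of transactions containing some item of `X`. -/
noncomputable def SDisj (R : τ → ι → Prop) (X : Set ι) : ℕ := Set.ncard {t : τ | ∃ i ∈ X, R t i}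

/-- Negative support: number of transactions containing no item of `X`. -/
noncomputable def SNeg (R : τ → ι → Prop) (X : Set ι) : ℕ := Set.ncard {t : τ | ∀ i ∈ X, ¬ R t i}

/-- The bond measure of `X` (0 when `SDisj X = 0`). -/
noncomputable def bond (R : τ → ι → Prop) (X : Set ι) : ℚ :=
  (SConj R X : ℚ) / (SDisj R X : ℚ)

theorem stmt4 (R : τ → ι → Prop) (X Y : Set ι) (hX : X.Nonempty) (hY : Y.Nonempty)
    (hXY : X ⊆ Y) (hd : 0 < SDisj R X) : bond R Y ≤ bond R X := by
  have hconj : SConj R Y ≤ SConj R X := by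
    apply Set.ncard_le_ncard _ (Set.toFinite _)
    intro t ht i hi
    exact ht i (hXY hi)
  have hdisj : SDisj R X ≤ SDisj R Y := by
    apply Set.ncard_le_ncard _ (Set.toFinite _)
    rintro t ⟨i, hi, hR⟩
    exact ⟨i, hXY hi, hR⟩
  have hdY : 0 < SDisj R Y := lt_of_lt_of_le hd hdisj
  unfold bond
  apply div_le_div₀ (by positivity) (by exact_mod_cast hconj)
    (by exact_mod_cast hd) (by exact_mod_cast hdisj)
end

section
/- The set of correlated patterns is an order ideal (downward closed under inclusion among nonempty sets): if Y is a correlated pattern (bond(Y) ≥ minbond) and ∅ ≠ X ⊆ Y, then X is correlated (bond(X) ≥ minbond). -/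
variable {τ ι : Type*} [Fintype τ] [Fintype ι]

theorem stmt6 (R : τ → ι → Prop) (minbond : ℚ) (hmb : 0 < minbond) (hmb1 : minbond ≤ 1)
    (X Y : Set ι) (hY : Y.Nonempty) (hYb : minbond ≤ bond R Y)
    (hX : X.Nonempty) (hXY : X ⊆ Y) : minbond ≤ bond R X := by
  have hconj : SConj R Y ≤ SConj R X := by
    apply Set.ncard_le_ncard _ (Set.toFinite _)
    intro t ht i hi
    exact ht i (hXY hi)
  have hdisj : SDisj R X ≤ SDisj R Y := by
    apply Set.ncard_le_ncard _ (Set.toFinite _)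
    intro t ⟨i, hi, h⟩
    exact ⟨i, hXY hi, h⟩
  have hcd : ∀ Z : Set ι, Z.Nonempty → SConj R Z ≤ SDisj R Z := by
    intro Z ⟨i, hi⟩
    apply Set.ncard_le_ncard _ (Set.toFinite _)
    intro t ht
    exact ⟨i, hi, ht i hi⟩
  rcases Nat.eq_zero_or_pos (SDisj R X) with h0 | hpos
  · exfalso
    have : SConj R Y = 0 := by
      have := hcd X hX
      omega
    rw [bond, this] at hYb
    simp at hYb
    linarith
  · have hposY : 0 < SDisj R Y := lt_of_lt_of_le hpos hdisj
    calc minbond ≤ bond R Y := hYb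
      _ ≤ bond R X := by
        rw [bond, bond]
        apply div_le_div₀ (by positivity) (by exact_mod_cast hconj)
          (by exact_mod_cast hpos) (by exact_mod_cast hdisj)
end

section
/- f_bond preserves the bond value: for every nonempty itemset X with SConj(X) > 0, bond(f_bond(X)) = bond(X), and moreover SConj(f_bond(X)) = SConj(X) and SDisj(f_bond(X)) = SDisj(X). -/
/-!
Adding an item `i` to `X` can only shrink the set of transactions containing all of `X` and
only enlarge the set of transactions containing some item of `X`. With `SConj X > 0`, the
ratio `SConj / SDisj` can therefore stay the same only if both counts, and hence (by finiteness)
both sets, are unchanged. So every item added by `f_bond` occurs in every transaction containing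
all of `X` and only in transactions meeting `X`, and adding all of them at once changes neither set.
-/

variable {τ ι : Type*} [Fintype τ] [Fintype ι]

/-- The closure operator associated with the bond measure. -/
noncomputable def fbond (R : τ → ι → Prop) (X : Set ι) : Set ι :=
  X ∪ {i : ι | i ∉ X ∧ bond R X = bond R (insert i X)}

lemma Nat.eq_and_eq_of_div_eq_div_of_le {c d c' d' : ℕ} (hc : 0 < c) (hd : 0 < d)
    (hc' : c' ≤ c) (hd' : d ≤ d') (h : (c : ℚ) / d = c' / d') : c' = c ∧ d' = d := by
  have hd'pos : 0 < d' := hd.trans_le hd'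
  have hcross : c * d' = c' * d := by
    rw [div_eq_div_iff (by positivity) (by positivity)] at h
    exact_mod_cast h
  have hle : c * d ≤ c * d' := Nat.mul_le_mul_left c hd'
  have hge : c' * d ≤ c * d := Nat.mul_le_mul_right d hc'
  constructor
  · exact Nat.eq_of_mul_eq_mul_right hd (by omega)
  · exact Nat.eq_of_mul_eq_mul_left hc (by omega)

section Support

variable {α β : Type*}

def conjSet (R : α → β → Prop) (X : Set β) : Set α := {t | ∀ i ∈ X, R t i}

def disjSet (R : α → β → Prop) (X : Set β) : Set α := {t | ∃ i ∈ X, R t i}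

variable {R : α → β → Prop} {X Y : Set β}

lemma conjSet_anti (h : X ⊆ Y) : conjSet R Y ⊆ conjSet R X :=
  fun _ ht i hi => ht i (h hi)

lemma disjSet_mono (h : X ⊆ Y) : disjSet R X ⊆ disjSet R Y :=
  fun _ ⟨i, hi, hr⟩ => ⟨i, h hi, hr⟩

lemma conjSet_subset_disjSet (hX : X.Nonempty) : conjSet R X ⊆ disjSet R X :=
  fun _ ht => hX.elim fun i hi => ⟨i, hi, ht i hi⟩

lemma SConj_eq_ncard_conjSet : SConj R X = (conjSet R X).ncard := rfl

lemma SDisj_eq_ncard_disjSet : SDisj R X = (disjSet R X).ncard := rfl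

variable [Finite α]

lemma conjSet_insert_eq_and_disjSet_insert_eq_of_bond_eq {i : β}
    (hX : X.Nonempty) (hc : 0 < SConj R X) (hb : bond R X = bond R (insert i X)) :
    conjSet R (insert i X) = conjSet R X ∧ disjSet R (insert i X) = disjSet R X := by
  have hsub := Set.subset_insert i X
  obtain ⟨hconj, hdisj⟩ := Nat.eq_and_eq_of_div_eq_div_of_le hc
    (hc.trans_le (Set.ncard_le_ncard (conjSet_subset_disjSet hX)))
    (Set.ncard_le_ncard (conjSet_anti hsub)) (Set.ncard_le_ncard (disjSet_mono hsub)) hb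
  exact ⟨Set.eq_of_subset_of_ncard_le (conjSet_anti hsub) hconj.ge,
    (Set.eq_of_subset_of_ncard_le (disjSet_mono hsub) hdisj.le).symm⟩

lemma conjSet_fbond_eq_and_disjSet_fbond_eq (hX : X.Nonempty) (hc : 0 < SConj R X) :
    conjSet R (fbond R X) = conjSet R X ∧ disjSet R (fbond R X) = disjSet R X := by
  have hsub : X ⊆ fbond R X := Set.subset_union_left
  have hinsert : ∀ i ∈ fbond R X, conjSet R (insert i X) = conjSet R X ∧
      disjSet R (insert i X) = disjSet R X := by
    rintro i (hi | ⟨-, hb⟩)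
    · simp only [Set.insert_eq_of_mem hi, and_self]
    · exact conjSet_insert_eq_and_disjSet_insert_eq_of_bond_eq hX hc hb
  refine ⟨(conjSet_anti hsub).antisymm fun t ht i hi => ?_,
    (disjSet_mono hsub).antisymm' fun t ⟨i, hi, hr⟩ => ?_⟩
  · rw [← (hinsert i hi).1] at ht
    exact ht i (Set.mem_insert i X)
  · rw [← (hinsert i hi).2]
    exact ⟨i, Set.mem_insert i X, hr⟩

end Support

theorem stmt10 (R : τ → ι → Prop) (X : Set ι) (hX : X.Nonempty) (hc : 0 < SConj R X) :
    bond R (fbond R X) = bond R X ∧ SConj R (fbond R X) = SConj R X ∧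
    SDisj R (fbond R X) = SDisj R X := by
  obtain ⟨hconj, hdisj⟩ := conjSet_fbond_eq_and_disjSet_fbond_eq hX hc
  have hSConj : SConj R (fbond R X) = SConj R X := by
    rw [SConj_eq_ncard_conjSet, SConj_eq_ncard_conjSet, hconj]
  have hSDisj : SDisj R (fbond R X) = SDisj R X := by
    rw [SDisj_eq_ncard_disjSet, SDisj_eq_ncard_disjSet, hdisj]
  exact ⟨by rw [bond, bond, hSConj, hSDisj], hSConj, hSDisj⟩
end

section
/- If X has SConj(X) > 0 and bond(X) > 0, then Y := f_bond(X) is a closed correlated pattern of its class: for every Z with Y ⊊ Z ⊆ I, bond(Z) < bond(Y). Equivalently, f_bond(X) is the maximal element of the equivalence class of X. -/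
variable {τ ι : Type*} [Fintype τ] [Fintype ι]

lemma conj_anti (R : τ → ι → Prop) {A B : Set ι} (h : A ⊆ B) :
    SConj R B ≤ SConj R A := by
  apply Set.ncard_le_ncard
  · intro t ht i hi; exact ht i (h hi)
  · exact Set.toFinite _

lemma disj_mono (R : τ → ι → Prop) {A B : Set ι} (h : A ⊆ B) :
    SDisj R A ≤ SDisj R B := by
  apply Set.ncard_le_ncard
  · rintro t ⟨i, hi, hR⟩; exact ⟨i, h hi, hR⟩
  · exact Set.toFinite _

lemma conj_le_disj (R : τ → ι → Prop) {A : Set ι} (hA : A.Nonempty) :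
    SConj R A ≤ SDisj R A := by
  apply Set.ncard_le_ncard
  · intro t ht
    obtain ⟨i, hi⟩ := hA
    exact ⟨i, hi, ht i hi⟩
  · exact Set.toFinite _

lemma bond_anti (R : τ → ι → Prop) {A B : Set ι} (hA : A.Nonempty) (h : A ⊆ B) :
    bond R B ≤ bond R A := by
  unfold bond
  rcases Nat.eq_zero_or_pos (SDisj R A) with h0 | hpos
  · have hcA : SConj R A = 0 := Nat.le_zero.mp (h0 ▸ conj_le_disj R hA)
    have hcB : SConj R B = 0 := Nat.le_zero.mp (hcA ▸ conj_anti R h)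
    simp [hcA, hcB]
  · exact div_le_div₀ (by positivity) (Nat.cast_le.mpr (conj_anti R h))
      (by exact_mod_cast hpos) (Nat.cast_le.mpr (disj_mono R h))

lemma sdisj_pos_of_bond_pos (R : τ → ι → Prop) {A : Set ι} (hb : 0 < bond R A) :
    0 < SDisj R A := by
  by_contra h
  push_neg at h
  have h0 : SDisj R A = 0 := Nat.le_zero.mp h
  rw [bond, h0] at hb
  simp at hb

lemma supports_eq_of_bond_eq (R : τ → ι → Prop) {X : Set ι} {i : ι}
    (hc : 0 < SConj R X) (hb : 0 < bond R X)
    (he : bond R X = bond R (insert i X)) :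
    SConj R (insert i X) = SConj R X ∧ SDisj R (insert i X) = SDisj R X := by
  have hsub : X ⊆ insert i X := Set.subset_insert i X
  have hcle := conj_anti R hsub
  have hdle := disj_mono R hsub
  have hdX : 0 < SDisj R X := sdisj_pos_of_bond_pos R hb
  have hd' : 0 < SDisj R (insert i X) := lt_of_lt_of_le hdX hdle
  have key : (SConj R X : ℚ) * SDisj R (insert i X)
      = (SConj R (insert i X) : ℚ) * SDisj R X := by
    rw [bond, bond] at he
    exact (div_eq_div_iff (by exact_mod_cast hdX.ne') (by exact_mod_cast hd'.ne')).mp he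
  have h1 : SConj R X * SDisj R (insert i X) = SConj R (insert i X) * SDisj R X := by
    exact_mod_cast key
  have h2 : SConj R (insert i X) * SDisj R X ≤ SConj R X * SDisj R X :=
    Nat.mul_le_mul_right _ hcle
  have h3 : SConj R X * SDisj R X ≤ SConj R X * SDisj R (insert i X) :=
    Nat.mul_le_mul_left _ hdle
  have h4 : SConj R X * SDisj R (insert i X) = SConj R X * SDisj R X := by omega
  have hdEq : SDisj R (insert i X) = SDisj R X :=
    Nat.eq_of_mul_eq_mul_left hc h4
  have hcEq : SConj R (insert i X) = SConj R X := by
    have : SConj R (insert i X) * SDisj R X = SConj R X * SDisj R X := by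
      rw [← h1, hdEq]
    exact Nat.eq_of_mul_eq_mul_right hdX this
  exact ⟨hcEq, hdEq⟩

lemma fbond_supports (R : τ → ι → Prop) {X : Set ι}
    (hc : 0 < SConj R X) (hb : 0 < bond R X) :
    SConj R (fbond R X) = SConj R X ∧ SDisj R (fbond R X) = SDisj R X := by
  have hXsub : X ⊆ fbond R X := Set.subset_union_left
  constructor
  · unfold SConj
    congr 1
    ext t
    simp only [Set.mem_setOf_eq]
    constructor
    · intro ht i hi; exact ht i (hXsub hi)
    · intro ht i hi
      rcases hi with hi | ⟨hni, hbe⟩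
      · exact ht i hi
      · -- use conj set equality for insert i X
        have hEq := (supports_eq_of_bond_eq R hc hb hbe).1
        have hsub : {t : τ | ∀ j ∈ insert i X, R t j} ⊆ {t : τ | ∀ j ∈ X, R t j} := by
          intro s hs j hj; exact hs j (Set.mem_insert_of_mem i hj)
        have hset : {t : τ | ∀ j ∈ insert i X, R t j} = {t : τ | ∀ j ∈ X, R t j} :=
          Set.eq_of_subset_of_ncard_le hsub (le_of_eq hEq.symm) (Set.toFinite _)
        have : t ∈ {t : τ | ∀ j ∈ insert i X, R t j} := by
          rw [hset]; exact ht
        exact this i (Set.mem_insert i X)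
  · unfold SDisj
    congr 1
    ext t
    simp only [Set.mem_setOf_eq]
    constructor
    · rintro ⟨i, hi, hR⟩
      rcases hi with hi | ⟨hni, hbe⟩
      · exact ⟨i, hi, hR⟩
      · have hEq := (supports_eq_of_bond_eq R hc hb hbe).2
        have hsub : {t : τ | ∃ j ∈ X, R t j} ⊆ {t : τ | ∃ j ∈ insert i X, R t j} := by
          rintro s ⟨j, hj, hRs⟩; exact ⟨j, Set.mem_insert_of_mem i hj, hRs⟩
        have hset : {t : τ | ∃ j ∈ X, R t j} = {t : τ | ∃ j ∈ insert i X, R t j} :=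
          Set.eq_of_subset_of_ncard_le hsub (le_of_eq hEq) (Set.toFinite _)
        have ht : t ∈ {t : τ | ∃ j ∈ insert i X, R t j} := ⟨i, Set.mem_insert i X, hR⟩
        rw [← hset] at ht
        exact ht
    · rintro ⟨i, hi, hR⟩; exact ⟨i, hXsub hi, hR⟩

theorem stmt11 (R : τ → ι → Prop) (X : Set ι) (hX : X.Nonempty)
    (hc : 0 < SConj R X) (hb : 0 < bond R X) :
    ∀ Z : Set ι, fbond R X ⊂ Z → bond R Z < bond R (fbond R X) := by
  intro Z hZ
  obtain ⟨hsc, hsd⟩ := fbond_supports R hc hb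
  have hbY : bond R (fbond R X) = bond R X := by
    rw [bond, bond, hsc, hsd]
  obtain ⟨i, hiZ, hiY⟩ := Set.exists_of_ssubset hZ
  have hXsub : X ⊆ fbond R X := Set.subset_union_left
  have hniX : i ∉ X := fun h => hiY (hXsub h)
  have hne : bond R X ≠ bond R (insert i X) := by
    intro h
    exact hiY (Or.inr ⟨hniX, h⟩)
  have hlt : bond R (insert i X) < bond R X :=
    lt_of_le_of_ne (bond_anti R hX (Set.subset_insert i X)) (Ne.symm hne)
  have hsubZ : insert i X ⊆ Z := by
    intro j hj
    rcases hj with rfl | hj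
    · exact hiZ
    · exact hZ.subset (hXsub hj)
  have hZle : bond R Z ≤ bond R (insert i X) :=
    bond_anti R ⟨i, Set.mem_insert i X⟩ hsubZ
  rw [hbY]
  exact lt_of_le_of_lt hZle hlt
end

section
/- Exactness of the representation (membership): a nonempty itemset X belongs to MCR if and only if X ∈ RMCR, or there exist M ∈ MMCR and F ∈ MFCR with M ⊆ X ⊆ F and bond(M) = bond(F). -/
variable {τ ι : Type*} [Fintype τ] [Fintype ι]

/-- Rare correlated patterns. -/
def MCR (R : τ → ι → Prop) (minsupp : ℕ) (minbond : ℚ) : Set (Set ι) :=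
  {X | X.Nonempty ∧ SConj R X < minsupp ∧ minbond ≤ bond R X}

/-- Closed rare correlated patterns. -/
def MFCR (R : τ → ι → Prop) (minsupp : ℕ) (minbond : ℚ) : Set (Set ι) :=
  {X | X ∈ MCR R minsupp minbond ∧ ∀ X₁ : Set ι, X ⊂ X₁ → bond R X₁ < bond R X}

/-- Minimal rare correlated patterns. -/
def MMCR (R : τ → ι → Prop) (minsupp : ℕ) (minbond : ℚ) : Set (Set ι) :=
  {X | X ∈ MCR R minsupp minbond ∧ ∀ X₁ : Set ι, X₁.Nonempty → X₁ ⊂ X → bond R X < bond R X₁}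

/-- The concise exact representation. -/
def RMCR (R : τ → ι → Prop) (minsupp : ℕ) (minbond : ℚ) : Set (Set ι) :=
  MMCR R minsupp minbond ∪ MFCR R minsupp minbond

/-!
Bond is antitone on nonempty itemsets, so between a minimal and a maximal itemset of
the same bond every itemset has that bond as well. Conversely, a rare correlated `X` lies above an
inclusion-minimal itemset of bond `bond X` and below an inclusion-maximal one; these are in `MMCR`
and `MFCR` respectively. Going up preserves rarity because `SConj` is antitone; going down with
constant bond preserves it because then `SConj = bond * SDisj` and `SDisj` is monotone.
-/

section Supports

variable (R : τ → ι → Prop) {X Y : Set ι}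

omit [Fintype ι] in
lemma SConj_anti (h : X ⊆ Y) : SConj R Y ≤ SConj R X :=
  Set.ncard_le_ncard (fun _ ht i hi => ht i (h hi)) (Set.toFinite _)

omit [Fintype ι] in
lemma SDisj_mono (h : X ⊆ Y) : SDisj R X ≤ SDisj R Y :=
  Set.ncard_le_ncard (fun _ ⟨i, hi, hR⟩ => ⟨i, h hi, hR⟩) (Set.toFinite _)

omit [Fintype ι] in
lemma SConj_le_SDisj (hX : X.Nonempty) : SConj R X ≤ SDisj R X :=
  Set.ncard_le_ncard (fun _ ht => ⟨hX.some, hX.some_mem, ht _ hX.some_mem⟩) (Set.toFinite _)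

omit [Fintype τ] [Fintype ι] in
lemma bond_nonneg (X : Set ι) : 0 ≤ bond R X := by
  unfold bond
  positivity

omit [Fintype ι] in
lemma SConj_eq_bond_mul_SDisj (hX : X.Nonempty) : (SConj R X : ℚ) = bond R X * SDisj R X := by
  by_cases hd : SDisj R X = 0
  · have hc : SConj R X = 0 := Nat.eq_zero_of_le_zero (hd ▸ SConj_le_SDisj R hX)
    simp [hc, hd]
  · exact (div_mul_cancel₀ _ (Nat.cast_ne_zero.mpr hd)).symm

omit [Fintype ι] in
lemma bond_anti_s14 (hX : X.Nonempty) (h : X ⊆ Y) : bond R Y ≤ bond R X := by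
  rcases Nat.eq_zero_or_pos (SConj R Y) with hc | hc
  · simpa [bond, hc] using bond_nonneg R X
  · have hdX : 0 < SDisj R X := hc.trans_le ((SConj_anti R h).trans (SConj_le_SDisj R hX))
    exact div_le_div₀ (Nat.cast_nonneg _) (mod_cast SConj_anti R h) (mod_cast hdX)
      (mod_cast SDisj_mono R h)

omit [Fintype ι] in
lemma SConj_le_of_subset_of_bond_eq (hX : X.Nonempty) (h : X ⊆ Y) (hb : bond R X = bond R Y) :
    SConj R X ≤ SConj R Y := by
  have hY : Y.Nonempty := hX.mono h
  have : (SConj R X : ℚ) ≤ SConj R Y := by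
    rw [SConj_eq_bond_mul_SDisj R hX, SConj_eq_bond_mul_SDisj R hY, hb]
    exact mul_le_mul_of_nonneg_left (mod_cast SDisj_mono R h) (bond_nonneg R Y)
  exact_mod_cast this

omit [Fintype ι] in
lemma bond_eq_of_subset_of_subset {M F : Set ι} (hM : M.Nonempty) (hMX : M ⊆ X) (hXF : X ⊆ F)
    (hb : bond R M = bond R F) : bond R X = bond R M :=
  le_antisymm (bond_anti_s14 R hM hMX) (hb ▸ bond_anti_s14 R (hM.mono hMX) hXF)

omit [Fintype ι] in
lemma mem_MCR_iff_of_subset_of_bond_eq {minsupp : ℕ} {minbond : ℚ} (hX : X.Nonempty)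
    (h : X ⊆ Y) (hb : bond R X = bond R Y) :
    X ∈ MCR R minsupp minbond ↔ Y ∈ MCR R minsupp minbond := by
  constructor
  · rintro ⟨-, hsupp, hbond⟩
    exact ⟨hX.mono h, (SConj_anti R h).trans_lt hsupp, hb ▸ hbond⟩
  · rintro ⟨-, hsupp, hbond⟩
    exact ⟨hX, (SConj_le_of_subset_of_bond_eq R hX h hb).trans_lt hsupp, hb ▸ hbond⟩

lemma exists_subset_bond_eq_forall_ssubset_bond_gt (hX : X.Nonempty) :
    ∃ M ⊆ X, M.Nonempty ∧ bond R M = bond R X ∧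
      ∀ X₁ : Set ι, X₁.Nonempty → X₁ ⊂ M → bond R M < bond R X₁ := by
  obtain ⟨M, hMX, hmin⟩ :=
    Finite.exists_le_minimal (p := fun Y => Y.Nonempty ∧ bond R Y = bond R X) ⟨hX, rfl⟩
  refine ⟨M, hMX, hmin.prop.1, hmin.prop.2, fun X₁ hX₁ hX₁M => ?_⟩
  refine (bond_anti_s14 R hX₁ hX₁M.subset).lt_of_ne fun hb => ?_
  exact hmin.not_prop_of_lt hX₁M ⟨hX₁, hb.symm.trans hmin.prop.2⟩

lemma exists_superset_bond_eq_forall_ssuperset_bond_lt (hX : X.Nonempty) :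
    ∃ F, X ⊆ F ∧ bond R F = bond R X ∧ ∀ X₁ : Set ι, F ⊂ X₁ → bond R X₁ < bond R F := by
  obtain ⟨F, hXF, hmax⟩ :=
    Finite.exists_le_maximal (p := fun Y => bond R Y = bond R X) rfl
  refine ⟨F, hXF, hmax.prop, fun X₁ hFX₁ => ?_⟩
  exact (bond_anti_s14 R (hX.mono hXF) hFX₁.subset).lt_of_ne fun hb =>
    hmax.not_prop_of_gt hFX₁ (hb.trans hmax.prop)

end Supports

theorem stmt14_general (R : τ → ι → Prop) (minsupp : ℕ) (minbond : ℚ)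
    (X : Set ι) :
    X ∈ MCR R minsupp minbond ↔
      X ∈ RMCR R minsupp minbond ∨
      ∃ M F : Set ι, M ∈ MMCR R minsupp minbond ∧ F ∈ MFCR R minsupp minbond ∧
        M ⊆ X ∧ X ⊆ F ∧ bond R M = bond R F := by
  constructor
  · intro hXmcr
    obtain ⟨M, hMX, hM, hMb, hMmin⟩ := exists_subset_bond_eq_forall_ssubset_bond_gt R hXmcr.1
    obtain ⟨F, hXF, hFb, hFmax⟩ := exists_superset_bond_eq_forall_ssuperset_bond_lt R hXmcr.1
    have hMmcr := (mem_MCR_iff_of_subset_of_bond_eq R hM hMX hMb).mpr hXmcr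
    have hFmcr := (mem_MCR_iff_of_subset_of_bond_eq R hXmcr.1 hXF hFb.symm).mp hXmcr
    exact Or.inr ⟨M, F, ⟨hMmcr, hMmin⟩, ⟨hFmcr, hFmax⟩, hMX, hXF, hMb.trans hFb.symm⟩
  · rintro ((h | h) | ⟨M, F, ⟨hMmcr, -⟩, -, hMX, hXF, hb⟩)
    · exact h.1
    · exact h.1
    · exact (mem_MCR_iff_of_subset_of_bond_eq R hMmcr.1 hMX
        (bond_eq_of_subset_of_subset R hMmcr.1 hMX hXF hb).symm).mp hMmcr

theorem stmt14 (R : τ → ι → Prop) (minsupp : ℕ) (minbond : ℚ)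
    (hclass : ∀ X Y : Set ι, X.Nonempty → Y.Nonempty → fbond R X = fbond R Y →
      X ∈ MCR R minsupp minbond → Y ∈ MCR R minsupp minbond)
    (X : Set ι) (hX : X.Nonempty) :
    X ∈ MCR R minsupp minbond ↔
      X ∈ RMCR R minsupp minbond ∨
      ∃ M F : Set ι, M ∈ MMCR R minsupp minbond ∧ F ∈ MFCR R minsupp minbond ∧
        M ⊆ X ∧ X ⊆ F ∧ bond R M = bond R F :=
  stmt14_general R minsupp minbond X
end
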